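/- Let m_b > 0, Λ ∈ (0,∞), t > 0, and let a ≥ 0 and ε ∈ (1,∞) satisfy 2a ≤ ε ≤ 2a + 2. Then ∫_{{k ∈ ℝ² : |k| < Λ}} (1 - e^{-t·ω(k)})² · ω(k)^{2a-3} dk ≤ (2π/(ε-1)) · t^{ε-2a} · ω(Λ)^{ε-1}, where ω(k) = (|k|² + m_b²)^{1/2} and ω(Λ) = (Λ² + m_b²)^{1/2}. -/

import Mathlib

open MeasureTheory Real Set Metric

lemma one_sub_exp_sq_le (x θ : ℝ) (hx : 0 ≤ x) (hθ0 : 0 ≤ θ) (hθ2 : θ ≤ 2) :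
    (1 - Real.exp (-x)) ^ 2 ≤ x ^ θ := by
  rcases eq_or_lt_of_le hx with h | h
  · simp [← h]
    positivity
  · have h1 : 0 ≤ 1 - Real.exp (-x) := by
      have : Real.exp (-x) ≤ 1 := Real.exp_le_one_iff.mpr (by linarith)
      linarith
    have h2 : 1 - Real.exp (-x) ≤ x := by
      have := Real.add_one_le_exp (-x); linarith
    have h3 : 1 - Real.exp (-x) ≤ 1 := by
      have := Real.exp_pos (-x); linarith
    rcases le_total x 1 with hx1 | hx1
    · calc (1 - Real.exp (-x)) ^ 2 ≤ x ^ 2 := by nlinarith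
        _ = x ^ (2 : ℝ) := by rw [← Real.rpow_natCast x 2]; norm_num
        _ ≤ x ^ θ := Real.rpow_le_rpow_of_exponent_ge h hx1 hθ2
    · calc (1 - Real.exp (-x)) ^ 2 ≤ 1 := by nlinarith
        _ ≤ x ^ θ := Real.one_le_rpow hx1 hθ0

lemma radial_integral (mb Λ ε : ℝ) (hmb : 0 < mb) (hΛ : 0 < Λ) (hε1 : 1 < ε) :
    ∫ y in Ioo (0:ℝ) Λ, y * Real.sqrt (y ^ 2 + mb ^ 2) ^ (ε - 3)
      = ((Λ ^ 2 + mb ^ 2) ^ ((ε - 1) / 2) - (mb ^ 2) ^ ((ε - 1) / 2)) / (ε - 1) := by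
  have hne : ε - 1 ≠ 0 := by linarith
  have hpos : ∀ y : ℝ, (0:ℝ) < y ^ 2 + mb ^ 2 := fun y => by positivity
  have hsqrt : ∀ y : ℝ, Real.sqrt (y ^ 2 + mb ^ 2) ^ (ε - 3)
      = (y ^ 2 + mb ^ 2) ^ ((ε - 3) / 2) := by
    intro y
    rw [Real.sqrt_eq_rpow, ← Real.rpow_mul (hpos y).le]
    ring_nf
  have hderiv : ∀ y : ℝ, HasDerivAt (fun r => (r ^ 2 + mb ^ 2) ^ ((ε - 1) / 2) / (ε - 1))
      (y * (y ^ 2 + mb ^ 2) ^ ((ε - 3) / 2)) y := by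
    intro y
    have hinner : HasDerivAt (fun r : ℝ => r ^ 2 + mb ^ 2) (2 * y) y := by
      simpa using (hasDerivAt_pow 2 y).add_const (mb ^ 2)
    have houter : HasDerivAt (fun u : ℝ => u ^ ((ε - 1) / 2))
        (((ε - 1) / 2) * (y ^ 2 + mb ^ 2) ^ ((ε - 1) / 2 - 1)) (y ^ 2 + mb ^ 2) :=
      Real.hasDerivAt_rpow_const (Or.inl (hpos y).ne')
    have := (houter.comp y hinner).div_const (ε - 1)
    have hexp : (ε - 1) / 2 - 1 = (ε - 3) / 2 := by ring
    rw [hexp] at this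
    refine this.congr_deriv ?_
    rw [div_eq_iff hne]
    ring
  have hcont : Continuous fun y : ℝ => y * (y ^ 2 + mb ^ 2) ^ ((ε - 3) / 2) := by
    apply continuous_id.mul
    exact (continuous_pow 2 |>.add continuous_const).rpow_const fun y => Or.inl (hpos y).ne'
  calc ∫ y in Ioo (0:ℝ) Λ, y * Real.sqrt (y ^ 2 + mb ^ 2) ^ (ε - 3)
      = ∫ y in (0:ℝ)..Λ, y * (y ^ 2 + mb ^ 2) ^ ((ε - 3) / 2) := by
        simp_rw [hsqrt]
        rw [intervalIntegral.integral_of_le hΛ.le, integral_Ioc_eq_integral_Ioo]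
    _ = ((Λ ^ 2 + mb ^ 2) ^ ((ε - 1) / 2) / (ε - 1))
        - ((0 ^ 2 + mb ^ 2) ^ ((ε - 1) / 2) / (ε - 1)) :=
        intervalIntegral.integral_eq_sub_of_hasDerivAt (fun y _ => hderiv y)
          (hcont.intervalIntegrable 0 Λ)
    _ = ((Λ ^ 2 + mb ^ 2) ^ ((ε - 1) / 2) - (mb ^ 2) ^ ((ε - 1) / 2)) / (ε - 1) := by
        rw [zero_pow (by norm_num), zero_add]; ring

lemma ball_integral (mb Λ ε : ℝ) (hmb : 0 < mb) (hΛ : 0 < Λ) :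
    ∫ k in {k : EuclideanSpace ℝ (Fin 2) | ‖k‖ < Λ}, Real.sqrt (‖k‖ ^ 2 + mb ^ 2) ^ (ε - 3)
      = 2 * π * ∫ y in Ioo (0:ℝ) Λ, y * Real.sqrt (y ^ 2 + mb ^ 2) ^ (ε - 3) := by
  set G : ℝ → ℝ := fun y => Real.sqrt (y ^ 2 + mb ^ 2) ^ (ε - 3) with hG
  have hset : {k : EuclideanSpace ℝ (Fin 2) | ‖k‖ < Λ} = Metric.ball 0 Λ := by
    ext k; simp [mem_ball_zero_iff]
  have hind : ∀ k : EuclideanSpace ℝ (Fin 2),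
      (Metric.ball (0 : EuclideanSpace ℝ (Fin 2)) Λ).indicator (fun k => G ‖k‖) k
        = (Iio Λ).indicator G ‖k‖ := by
    intro k
    by_cases h : ‖k‖ < Λ <;>
      simp [Set.indicator_apply, mem_ball_zero_iff, h]
  have h1 : ∫ k in {k : EuclideanSpace ℝ (Fin 2) | ‖k‖ < Λ}, G ‖k‖
      = ∫ k : EuclideanSpace ℝ (Fin 2), (Iio Λ).indicator G ‖k‖ := by
    rw [hset, ← integral_indicator measurableSet_ball]
    exact integral_congr_ae (Filter.Eventually.of_forall hind)
  rw [h1, MeasureTheory.integral_fun_norm_addHaar volume ((Iio Λ).indicator G)]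
  have hdim : Module.finrank ℝ (EuclideanSpace ℝ (Fin 2)) = 2 := by
    simp [finrank_euclideanSpace]
  rw [hdim]
  have hvol : (volume (Metric.ball (0 : EuclideanSpace ℝ (Fin 2)) 1)).toReal = π := by
    rw [EuclideanSpace.volume_ball]
    have : Real.sqrt π ^ 2 = π := Real.sq_sqrt Real.pi_pos.le
    simp [this]
    rw [show (1:ℝ) + 1 = 2 by norm_num, Real.Gamma_two]
    simp [ENNReal.toReal_ofReal Real.pi_pos.le]
  rw [measureReal_def, hvol]
  have h2 : ∫ y in Ioi (0:ℝ), y ^ (2 - 1) • (Iio Λ).indicator G y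
      = ∫ y in Ioo (0:ℝ) Λ, y * G y := by
    have : ∀ y : ℝ, y ^ (2 - 1) • (Iio Λ).indicator G y
        = (Iio Λ).indicator (fun y => y * G y) y := by
      intro y
      by_cases h : y ∈ Iio Λ <;> simp [Set.indicator_apply, h]
    simp_rw [this]
    rw [setIntegral_indicator measurableSet_Iio, Ioi_inter_Iio]
  rw [h2, nsmul_eq_mul, smul_eq_mul]
  ring

set_option maxHeartbeats 1000000 in
/-- For `m_b > 0`, `Λ ∈ (0,∞)`, `t > 0`, `a ≥ 0` and `ε ∈ (1,∞)` with `2a ≤ ε ≤ 2a + 2`, one has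
`∫_{|k| < Λ} (1 - e^{-tω(k)})² ω(k)^{2a-3} dk ≤ (2π/(ε-1)) t^{ε-2a} ω(Λ)^{ε-1}`,
where `ω(k) = √(|k|² + m_b²)` and `ω(Λ) = √(Λ² + m_b²)`. -/
theorem UtN_weighted_tnorm_bound (mb Λ t a ε : ℝ) (hmb : 0 < mb) (hΛ : 0 < Λ) (ht : 0 < t)
    (ha : 0 ≤ a) (hε1 : 1 < ε) (hεa : 2 * a ≤ ε) (hεa2 : ε ≤ 2 * a + 2) :
    (∫ k in {k : EuclideanSpace ℝ (Fin 2) | ‖k‖ < Λ},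
        (1 - Real.exp (-t * Real.sqrt (‖k‖ ^ 2 + mb ^ 2))) ^ 2 *
          Real.sqrt (‖k‖ ^ 2 + mb ^ 2) ^ (2 * a - 3))
      ≤ (2 * Real.pi / (ε - 1)) * t ^ (ε - 2 * a) * Real.sqrt (Λ ^ 2 + mb ^ 2) ^ (ε - 1) := by
  have hεne : ε - 1 ≠ 0 := by linarith
  set θ := ε - 2 * a with hθ
  have hθ0 : 0 ≤ θ := by simp [hθ]; linarith
  have hθ2 : θ ≤ 2 := by simp [hθ]; linarith
  have hωpos : ∀ k : EuclideanSpace ℝ (Fin 2), 0 < Real.sqrt (‖k‖ ^ 2 + mb ^ 2) := by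
    intro k; exact Real.sqrt_pos.mpr (by positivity)
  -- pointwise bound
  have hpt : ∀ k : EuclideanSpace ℝ (Fin 2),
      (1 - Real.exp (-t * Real.sqrt (‖k‖ ^ 2 + mb ^ 2))) ^ 2 *
          Real.sqrt (‖k‖ ^ 2 + mb ^ 2) ^ (2 * a - 3)
        ≤ t ^ θ * Real.sqrt (‖k‖ ^ 2 + mb ^ 2) ^ (ε - 3) := by
    intro k
    set ω := Real.sqrt (‖k‖ ^ 2 + mb ^ 2) with hω
    have hω0 : 0 < ω := hωpos k
    have h1 : (1 - Real.exp (-(t * ω))) ^ 2 ≤ (t * ω) ^ θ :=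
      one_sub_exp_sq_le (t * ω) θ (by positivity) hθ0 hθ2
    have h2 : (t * ω) ^ θ = t ^ θ * ω ^ θ := Real.mul_rpow ht.le hω0.le
    calc (1 - Real.exp (-t * ω)) ^ 2 * ω ^ (2 * a - 3)
        ≤ t ^ θ * ω ^ θ * ω ^ (2 * a - 3) := by
          rw [neg_mul]
          exact mul_le_mul_of_nonneg_right (h2 ▸ h1) (Real.rpow_nonneg hω0.le _)
      _ = t ^ θ * ω ^ (ε - 3) := by
          rw [mul_assoc, ← Real.rpow_add hω0]
          congr 1
          · congr 1; rw [hθ]; ring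
  -- continuity and integrability
  have hcω : Continuous fun k : EuclideanSpace ℝ (Fin 2) => Real.sqrt (‖k‖ ^ 2 + mb ^ 2) :=
    (continuous_norm.pow 2 |>.add continuous_const).sqrt
  have hcrpow : ∀ p : ℝ, Continuous
      fun k : EuclideanSpace ℝ (Fin 2) => Real.sqrt (‖k‖ ^ 2 + mb ^ 2) ^ p := by
    intro p
    exact hcω.rpow_const fun k => Or.inl (hωpos k).ne'
  have hcf : Continuous fun k : EuclideanSpace ℝ (Fin 2) =>
      (1 - Real.exp (-t * Real.sqrt (‖k‖ ^ 2 + mb ^ 2))) ^ 2 *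
        Real.sqrt (‖k‖ ^ 2 + mb ^ 2) ^ (2 * a - 3) := by
    exact Continuous.mul (by fun_prop) (hcrpow _)
  have hcg : Continuous fun k : EuclideanSpace ℝ (Fin 2) =>
      t ^ θ * Real.sqrt (‖k‖ ^ 2 + mb ^ 2) ^ (ε - 3) := continuous_const.mul (hcrpow _)
  have hset : {k : EuclideanSpace ℝ (Fin 2) | ‖k‖ < Λ} = Metric.ball 0 Λ := by
    ext k; simp [mem_ball_zero_iff]
  have hIf : IntegrableOn (fun k : EuclideanSpace ℝ (Fin 2) =>
      (1 - Real.exp (-t * Real.sqrt (‖k‖ ^ 2 + mb ^ 2))) ^ 2 *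
        Real.sqrt (‖k‖ ^ 2 + mb ^ 2) ^ (2 * a - 3))
      {k : EuclideanSpace ℝ (Fin 2) | ‖k‖ < Λ} := by
    rw [hset]
    exact (hcf.continuousOn.integrableOn_compact (isCompact_closedBall 0 Λ)).mono_set
      Metric.ball_subset_closedBall
  have hIg : IntegrableOn (fun k : EuclideanSpace ℝ (Fin 2) =>
      t ^ θ * Real.sqrt (‖k‖ ^ 2 + mb ^ 2) ^ (ε - 3))
      {k : EuclideanSpace ℝ (Fin 2) | ‖k‖ < Λ} := by
    rw [hset]
    exact (hcg.continuousOn.integrableOn_compact (isCompact_closedBall 0 Λ)).mono_set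
      Metric.ball_subset_closedBall
  -- main chain
  have hX : Real.sqrt (Λ ^ 2 + mb ^ 2) ^ (ε - 1) = (Λ ^ 2 + mb ^ 2) ^ ((ε - 1) / 2) := by
    rw [Real.sqrt_eq_rpow, ← Real.rpow_mul (by positivity)]
    ring_nf
  have hY : 0 ≤ (mb ^ 2 : ℝ) ^ ((ε - 1) / 2) := Real.rpow_nonneg (by positivity) _
  calc (∫ k in {k : EuclideanSpace ℝ (Fin 2) | ‖k‖ < Λ},
        (1 - Real.exp (-t * Real.sqrt (‖k‖ ^ 2 + mb ^ 2))) ^ 2 *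
          Real.sqrt (‖k‖ ^ 2 + mb ^ 2) ^ (2 * a - 3))
      ≤ ∫ k in {k : EuclideanSpace ℝ (Fin 2) | ‖k‖ < Λ},
          t ^ θ * Real.sqrt (‖k‖ ^ 2 + mb ^ 2) ^ (ε - 3) :=
        setIntegral_mono hIf hIg fun k => hpt k
    _ = t ^ θ * ∫ k in {k : EuclideanSpace ℝ (Fin 2) | ‖k‖ < Λ},
          Real.sqrt (‖k‖ ^ 2 + mb ^ 2) ^ (ε - 3) := integral_const_mul _ _
    _ = t ^ θ * (2 * π * (((Λ ^ 2 + mb ^ 2) ^ ((ε - 1) / 2)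
          - (mb ^ 2) ^ ((ε - 1) / 2)) / (ε - 1))) := by
        rw [ball_integral mb Λ ε hmb hΛ, radial_integral mb Λ ε hmb hΛ hε1]
    _ ≤ (2 * Real.pi / (ε - 1)) * t ^ θ * Real.sqrt (Λ ^ 2 + mb ^ 2) ^ (ε - 1) := by
        rw [hX]
        have htθ : 0 < t ^ θ := Real.rpow_pos_of_pos ht _
        have hπ : 0 < π := Real.pi_pos
        have hε1' : 0 < ε - 1 := by linarith
        have h : (2 * π / (ε - 1)) * t ^ θ * (Λ ^ 2 + mb ^ 2) ^ ((ε - 1) / 2)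
            - t ^ θ * (2 * π * (((Λ ^ 2 + mb ^ 2) ^ ((ε - 1) / 2)
              - (mb ^ 2) ^ ((ε - 1) / 2)) / (ε - 1)))
            = (2 * π * t ^ θ / (ε - 1)) * (mb ^ 2) ^ ((ε - 1) / 2) := by
          field_simp
          ring
        have h2 : 0 ≤ (2 * π * t ^ θ / (ε - 1)) * (mb ^ 2) ^ ((ε - 1) / 2) :=
          mul_nonneg (by positivity) hY
        linarith
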